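/- arXiv:1606.07894 — 2 statements merged into one kernel-verified Lean document; each statement's English description precedes it below -/
import Mathlib

section
/- Let (V,h) be a real nondegenerate quadratic space of even dimension with ν² = σ ∈ {±1}. There exists a unital ℝ-algebra isomorphism φ₀ : Cl(V,h) → Cl(V,-σh) determined by v ↦ ν v on V, and the induced group isomorphism φ : G(V,h) → G(V,-σh) between the Clifford groups satisfies Ad₀ ∘ φ = twisted-Ad₀, i.e. φ intertwines the twisted vector representation of G(V,h) with the untwisted vector representation of G(V,-σh). -/
/-!
Since `d` is even, the volume element `ν` anticommutes with `V`, so `(ν v)² = -ν² v² = -σ h(v, v)`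
and `v ↦ ν v` extends to an algebra map `ψ : Cl(V, -σh) → Cl(V, h)`. The volume element `ν'` of
`Cl(V, -σh)` also squares to `σ` (the `d` factors `-σ` cancel), and `ψ ν' = ±ν`; hence
`v ↦ ±σ ν' v` extends to an inverse of `ψ`, and `φ₀ := ψ⁻¹`. Finally `a ν = ν π(a)` for every `a`,
so `ψ (φ₀ a · v · φ₀ a⁻¹) = a ν v a⁻¹ = ν π(a) v a⁻¹ = ν w = ψ w`.
-/

open CliffordAlgebra

section Anticommute

variable {R A : Type*} [CommRing R] [Ring A] [Algebra R A]

theorem List.mul_prod_of_forall_anticomm {x : A} {l : List A} (h : ∀ y ∈ l, x * y = -(y * x)) :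
    x * l.prod = (-1 : R) ^ l.length • (l.prod * x) := by
  induction l with
  | nil => simp
  | cons y l ih =>
    rw [List.forall_mem_cons] at h
    rw [List.prod_cons, ← mul_assoc, h.1, neg_mul, mul_assoc, ih h.2, mul_smul_comm,
      List.length_cons, pow_succ, mul_neg_one, neg_smul, mul_assoc]

theorem mul_pow_of_anticomm {x c : A} (h : x * c = -(c * x)) (n : ℕ) :
    x * c ^ n = (-1 : R) ^ n • (c ^ n * x) := by
  simpa using List.mul_prod_of_forall_anticomm (R := R) (l := List.replicate n c)
    fun y hy => List.eq_of_mem_replicate hy ▸ h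

theorem List.prod_map_mul_left_of_anticomm {c : A} {l : List A} (h : ∀ y ∈ l, y * c = -(c * y)) :
    (l.map (c * ·)).prod = (-1 : R) ^ l.length.choose 2 • (c ^ l.length * l.prod) := by
  induction l with
  | nil => simp
  | cons y l ih =>
    rw [List.forall_mem_cons] at h
    rw [List.map_cons, List.prod_cons, ih h.2, mul_smul_comm, mul_assoc, ← mul_assoc y,
      mul_pow_of_anticomm (R := R) h.1, smul_mul_assoc, mul_smul_comm, smul_smul,
      List.length_cons, Nat.choose_succ_succ', Nat.choose_one_right, pow_add, pow_succ',
      List.prod_cons]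
    simp only [mul_assoc, mul_comm]

end Anticommute

namespace CliffordAlgebra

variable {R V : Type*} [CommRing R] [AddCommGroup V] [Module R V] {Q : QuadraticForm R V}

theorem ι_mul_prod_map_ι_of_forall_isOrtho {l : List V} {u : V} (h : ∀ w ∈ l, Q.IsOrtho u w) :
    ι Q u * (l.map (ι Q)).prod = (-1 : R) ^ l.length • ((l.map (ι Q)).prod * ι Q u) := by
  simpa using List.mul_prod_of_forall_anticomm (l := l.map (ι Q)) (by
    simpa using fun w hw => ι_mul_ι_comm_of_isOrtho (h w hw))

theorem ι_mul_prod_map_ι_of_mem {l : List V} (hl : l.Pairwise Q.IsOrtho) {v : V} (hv : v ∈ l) :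
    ι Q v * (l.map (ι Q)).prod = -((-1 : R) ^ l.length • ((l.map (ι Q)).prod * ι Q v)) := by
  induction l with
  | nil => simp at hv
  | cons u l ih =>
    rw [List.pairwise_cons] at hl
    have hu := ι_mul_prod_map_ι_of_forall_isOrtho hl.1
    rw [List.map_cons, List.prod_cons, List.length_cons, pow_succ, mul_neg_one, neg_smul, neg_neg]
    rcases List.mem_cons.1 hv with rfl | hv
    · conv_lhs => rw [hu]
      rw [mul_smul_comm, mul_assoc]
    · rw [← mul_assoc, ← neg_neg (ι Q v * ι Q u), ← ι_mul_ι_comm_of_isOrtho (hl.1 v hv), neg_mul,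
        mul_assoc, ih hl.2 hv, mul_neg, neg_neg, mul_smul_comm, mul_assoc]

theorem prod_map_ι_mul_self {l : List V} (hl : l.Pairwise Q.IsOrtho) :
    (l.map (ι Q)).prod * (l.map (ι Q)).prod =
      algebraMap R _ ((-1) ^ l.length.choose 2 * (l.map Q).prod) := by
  induction l with
  | nil => simp
  | cons u l ih =>
    rw [List.pairwise_cons] at hl
    have hu := ι_mul_prod_map_ι_of_forall_isOrtho hl.1
    set P := (l.map (ι Q)).prod
    calc ι Q u * P * (ι Q u * P) = (ι Q u * P) * ι Q u * P := by simp only [mul_assoc]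
      _ = (-1 : R) ^ l.length • (P * (ι Q u * ι Q u) * P) := by
        rw [hu, smul_mul_assoc, smul_mul_assoc, mul_assoc P]
      _ = algebraMap R _ ((-1) ^ (u :: l).length.choose 2 * ((u :: l).map Q).prod) := by
        rw [ι_sq_scalar, ← Algebra.commutes, mul_assoc, ih hl.2, ← map_mul, Algebra.smul_def,
          ← map_mul, List.length_cons, Nat.choose_succ_succ', Nat.choose_one_right, pow_add,
          List.map_cons, List.prod_cons]
        congr 1
        ring

theorem ι_mul_eq_neg_mul_ι_of_span {s : Set V} (hs : Submodule.span R s = ⊤)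
    {μ : CliffordAlgebra Q} (h : ∀ v ∈ s, ι Q v * μ = -(μ * ι Q v)) (v : V) :
    ι Q v * μ = -(μ * ι Q v) :=
  LinearMap.congr_fun (LinearMap.ext_on hs (f := (LinearMap.mulRight R μ).comp (ι Q))
    (g := -(LinearMap.mulLeft R μ).comp (ι Q)) h) v

theorem ι_mul_prod_map_ι {l : List V} (hl : l.Pairwise Q.IsOrtho)
    (hspan : Submodule.span R {v | v ∈ l} = ⊤) (heven : Even l.length) (v : V) :
    ι Q v * (l.map (ι Q)).prod = -((l.map (ι Q)).prod * ι Q v) :=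
  ι_mul_eq_neg_mul_ι_of_span hspan (fun _ hv => by
    rw [ι_mul_prod_map_ι_of_mem hl hv, heven.neg_one_pow, one_smul]) v

theorem mul_eq_mul_involute {μ : CliffordAlgebra Q} (h : ∀ v, ι Q v * μ = -(μ * ι Q v))
    (x : CliffordAlgebra Q) : x * μ = μ * involute x := by
  induction x using CliffordAlgebra.induction with
  | algebraMap r => rw [involute.commutes, Algebra.commutes]
  | ι v => rw [h, involute_ι, mul_neg]
  | mul x y hx hy => rw [mul_assoc, hy, ← mul_assoc, hx, map_mul, mul_assoc]
  | add x y hx hy => rw [add_mul, hx, hy, map_add, mul_add]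

section LiftMulLeft

variable {Q₁ Q₂ : QuadraticForm R V} (μ : CliffordAlgebra Q₂) (σ : R)
  (hμ : ∀ v, ι Q₂ v * μ = -(μ * ι Q₂ v)) (hμμ : μ * μ = algebraMap R _ σ)
  (hQ : ∀ v, Q₁ v = -σ * Q₂ v)

def liftMulLeft : CliffordAlgebra Q₁ →ₐ[R] CliffordAlgebra Q₂ :=
  lift Q₁ ⟨(LinearMap.mulLeft R μ).comp (ι Q₂), fun v => by
    calc μ * ι Q₂ v * (μ * ι Q₂ v) = -(μ * μ * (ι Q₂ v * ι Q₂ v)) := by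
          rw [mul_assoc, ← mul_assoc (ι Q₂ v), hμ]; noncomm_ring
      _ = algebraMap R _ (Q₁ v) := by rw [hμμ, ι_sq_scalar, ← map_mul, ← map_neg, hQ, neg_mul]⟩

@[simp]
theorem liftMulLeft_ι (v : V) : liftMulLeft μ σ hμ hμμ hQ (ι Q₁ v) = μ * ι Q₂ v :=
  lift_ι_apply _ _ v

theorem liftMulLeft_prod_map_ι {l : List V} {r : ℕ} (hr : l.length = 2 * r) :
    liftMulLeft μ σ hμ hμμ hQ (l.map (ι Q₁)).prod =
      ((-1) ^ l.length.choose 2 * σ ^ r) • (l.map (ι Q₂)).prod := by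
  have hmap : (l.map (ι Q₁)).map (liftMulLeft μ σ hμ hμμ hQ) = (l.map (ι Q₂)).map (μ * ·) := by
    simp only [List.map_map, Function.comp_def, liftMulLeft_ι]
  rw [map_list_prod, hmap, List.prod_map_mul_left_of_anticomm (R := R) (by simp [hμ]),
    List.length_map, hr, pow_mul, sq, hμμ, ← map_pow, ← Algebra.smul_def, smul_smul]

end LiftMulLeft

theorem _root_.QuadraticMap.IsOrtho.smul {x y : V} (h : Q.IsOrtho x y) (a : R) :
    (a • Q).IsOrtho x y := by
  rw [QuadraticMap.isOrtho_def] at h ⊢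
  simp only [smul_apply, h, smul_add]

theorem prod_map_ι_smul_mul_self {l : List V} (hl : l.Pairwise Q.IsOrtho) (a : R) :
    (l.map (ι (a • Q))).prod * (l.map (ι (a • Q))).prod =
      algebraMap R _ (a ^ l.length * ((-1) ^ l.length.choose 2 * (l.map Q).prod)) := by
  have hprod : (l.map (a • Q)).prod = a ^ l.length * (l.map Q).prod := by
    rw [show ⇑(a • Q) = fun v => a * Q v from rfl, List.prod_map_mul, List.map_const',
      List.prod_replicate]
  rw [prod_map_ι_mul_self (hl.imp (·.smul a)), hprod, mul_left_comm]

theorem exists_algEquiv_neg_smul {l : List V} (hl : l.Pairwise Q.IsOrtho)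
    (hspan : Submodule.span R {v | v ∈ l} = ⊤) {r : ℕ} (hr : l.length = 2 * r) {σ : R}
    (hσσ : σ * σ = 1) (hσ : (-1) ^ l.length.choose 2 * (l.map Q).prod = σ) :
    ∃ e : CliffordAlgebra Q ≃ₐ[R] CliffordAlgebra ((-σ) • Q),
      ∀ v, e.symm (ι _ v) = (l.map (ι Q)).prod * ι Q v := by
  set ν := (l.map (ι Q)).prod
  set ν' := (l.map (ι ((-σ) • Q))).prod
  have heven : Even l.length := ⟨r, by omega⟩
  have hl' : l.Pairwise ((-σ) • Q).IsOrtho := hl.imp (·.smul _)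
  have hνι := ι_mul_prod_map_ι hl hspan heven
  have hνν : ν * ν = algebraMap R _ σ := by rw [prod_map_ι_mul_self hl, hσ]
  have hν'ν' : ν' * ν' = algebraMap R _ σ := by
    rw [prod_map_ι_smul_mul_self hl, hσ, hr, pow_mul, neg_sq, sq, hσσ, one_pow, one_mul]
  obtain ⟨u, hu⟩ : ∃ u : R, (-1) ^ l.length.choose 2 * σ ^ r = u := ⟨_, rfl⟩
  have huu : u * u = 1 := by
    rw [← hu, mul_mul_mul_comm, ← pow_add, ← mul_pow, hσσ, one_pow, mul_one, ← two_mul, pow_mul,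
      neg_one_sq, one_pow]
  obtain ⟨t, ht⟩ : ∃ t : R, t = u * σ := ⟨_, rfl⟩
  have hut : u * t * σ = 1 := by rw [ht]; linear_combination σ * σ * huu + hσσ
  have htt : t * t = 1 := by rw [ht]; linear_combination σ * σ * huu + hσσ
  have htν' (v : V) : ι ((-σ) • Q) v * (t • ν') = -((t • ν') * ι _ v) := by
    rw [mul_smul_comm, smul_mul_assoc, ι_mul_prod_map_ι hl' hspan heven, smul_neg]
  have htν'sq : (t • ν') * (t • ν') = algebraMap R _ σ := by
    rw [smul_mul_smul_comm, htt, one_smul, hν'ν']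
  let ψ := liftMulLeft (Q₁ := (-σ) • Q) ν σ hνι hνν fun _ => rfl
  let χ := liftMulLeft (t • ν') σ htν' htν'sq fun v => by
    show Q v = -σ * (-σ * Q v)
    rw [← mul_assoc, neg_mul_neg, hσσ, one_mul]
  have hψν' : ψ ν' = u • ν := by rw [← hu]; exact liftMulLeft_prod_map_ι _ _ _ _ _ hr
  have hχν : χ ν = u • ν' := by rw [← hu]; exact liftMulLeft_prod_map_ι _ _ _ _ _ hr
  refine ⟨AlgEquiv.ofAlgHom χ ψ ?_ ?_, liftMulLeft_ι (Q₁ := (-σ) • Q) ν σ hνι hνν fun _ => rfl⟩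
  · ext v
    calc χ (ψ (ι _ v)) = χ ν * χ (ι Q v) := by rw [liftMulLeft_ι, map_mul]
      _ = (u * t) • (ν' * ν' * ι _ v) := by
        rw [hχν, liftMulLeft_ι, ← mul_assoc, smul_mul_smul_comm, smul_mul_assoc]
      _ = ι _ v := by rw [hν'ν', ← Algebra.smul_def, smul_smul, hut, one_smul]
  · ext v
    calc ψ (χ (ι Q v)) = t • (ψ ν' * ψ (ι _ v)) := by
          rw [liftMulLeft_ι, map_mul, map_smul, smul_mul_assoc]
      _ = (u * t) • (ν * ν * ι Q v) := by
        rw [hψν', liftMulLeft_ι, smul_mul_assoc, smul_smul, mul_comm t, mul_assoc]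
      _ = ι Q v := by rw [hνν, ← Algebra.smul_def, smul_smul, hut, one_smul]

end CliffordAlgebra

theorem clifford_iso_twisted_untwisted_general
    {V : Type*} [AddCommGroup V] [Module ℝ V] (Q : QuadraticForm ℝ V)
    (d : ℕ) (hd : Even d) (b : Module.Basis (Fin d) ℝ V)
    (horth : ∀ i j, i ≠ j → QuadraticMap.polar Q (b i) (b j) = 0)
    (ν : CliffordAlgebra Q) (hν : ν = (List.ofFn fun i => ι Q (b i)).prod)
    (σ : ℝ) (hσ1 : σ = 1 ∨ σ = -1)
    (hσ : ν * ν = algebraMap ℝ (CliffordAlgebra Q) σ) :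
    ∃ φ₀ : CliffordAlgebra Q ≃ₐ[ℝ] CliffordAlgebra ((-σ) • Q),
      (∀ v : V, φ₀ (ν * ι Q v) = ι ((-σ) • Q) v) ∧
      (∀ a : (CliffordAlgebra Q)ˣ,
        ((a : CliffordAlgebra Q) ∈ evenOdd Q 0 ∨ (a : CliffordAlgebra Q) ∈ evenOdd Q 1) →
        (∀ v : V, ∃ w : V, (a : CliffordAlgebra Q) * ι Q v * ↑a⁻¹ = ι Q w) →
        ∀ v w : V,
          involute (a : CliffordAlgebra Q) * ι Q v * ↑a⁻¹ = ι Q w →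
            φ₀ ↑a * ι ((-σ) • Q) v * φ₀ ↑a⁻¹ = ι ((-σ) • Q) w) := by
  obtain ⟨r, hr⟩ := hd
  set l := List.ofFn b
  have hl : l.Pairwise Q.IsOrtho :=
    List.pairwise_ofFn.2 fun i j hij => QuadraticMap.isOrtho_polarBilin.1 (horth i j hij.ne)
  have hspan : Submodule.span ℝ {v | v ∈ l} = ⊤ := by
    simpa only [l, List.mem_ofFn', Set.ofPred_mem_eq] using b.span_eq
  have hlen : l.length = 2 * r := by rw [List.length_ofFn, hr, two_mul]
  have hνl : ν = (l.map (ι Q)).prod := by rw [hν, List.map_ofFn]; rfl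
  have hσσ : σ * σ = 1 := by rcases hσ1 with rfl | rfl <;> norm_num
  have hσl : (-1) ^ l.length.choose 2 * (l.map Q).prod = σ :=
    (algebraMap ℝ (CliffordAlgebra Q)).injective (by rw [← prod_map_ι_mul_self hl, ← hνl, hσ])
  obtain ⟨e, he⟩ := exists_algEquiv_neg_smul hl hspan hlen hσσ hσl
  have hνι : ∀ v, ι Q v * ν = -(ν * ι Q v) := hνl ▸ ι_mul_prod_map_ι hl hspan ⟨r, by omega⟩
  rw [← hνl] at he
  refine ⟨e, fun v => by rw [← he, e.apply_symm_apply], fun a _ _ v w hvw => e.symm.injective ?_⟩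
  rw [map_mul, map_mul, he, he, e.symm_apply_apply, e.symm_apply_apply, ← mul_assoc,
    mul_eq_mul_involute hνι]
  simp only [mul_assoc] at hvw ⊢
  rw [hvw]

/-- Let `(V,h)` be a real nondegenerate quadratic space of even dimension
with `ν² = σ ∈ {±1}`.  There exists a unital ℝ-algebra isomorphism
`φ₀ : Cl(V,h) → Cl(V,-σh)` determined by `v ↦ ν v` on `V`, and the induced group
isomorphism between the Clifford groups intertwines the twisted vector representation of
`G(V,h)` with the untwisted vector representation of `G(V,-σh)`: for every `a ∈ G(V,h)`
(a homogeneous unit with `Ad(a)(V) = V`) and `v, w ∈ V`, if `π(a) v a⁻¹ = w` in `Cl(V,h)`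
then `φ₀(a) v φ₀(a)⁻¹ = w` in `Cl(V,-σh)`. -/
theorem clifford_iso_twisted_untwisted
    {V : Type*} [AddCommGroup V] [Module ℝ V] (Q : QuadraticForm ℝ V)
    (d : ℕ) (hd : Even d) (hd0 : 0 < d) (b : Module.Basis (Fin d) ℝ V)
    (hQ : ∀ i, Q (b i) = 1 ∨ Q (b i) = -1)
    (horth : ∀ i j, i ≠ j → QuadraticMap.polar Q (b i) (b j) = 0)
    (ν : CliffordAlgebra Q) (hν : ν = (List.ofFn fun i => ι Q (b i)).prod)
    (σ : ℝ) (hσ1 : σ = 1 ∨ σ = -1)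
    (hσ : ν * ν = algebraMap ℝ (CliffordAlgebra Q) σ) :
    ∃ φ₀ : CliffordAlgebra Q ≃ₐ[ℝ] CliffordAlgebra ((-σ) • Q),
      (∀ v : V, φ₀ (ν * ι Q v) = ι ((-σ) • Q) v) ∧
      (∀ a : (CliffordAlgebra Q)ˣ,
        ((a : CliffordAlgebra Q) ∈ evenOdd Q 0 ∨ (a : CliffordAlgebra Q) ∈ evenOdd Q 1) →
        (∀ v : V, ∃ w : V, (a : CliffordAlgebra Q) * ι Q v * ↑a⁻¹ = ι Q w) →
        ∀ v w : V,
          involute (a : CliffordAlgebra Q) * ι Q v * ↑a⁻¹ = ι Q w →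
            φ₀ ↑a * ι ((-σ) • Q) v * φ₀ ↑a⁻¹ = ι ((-σ) • Q) w) :=
  clifford_iso_twisted_untwisted_general Q d hd b horth ν hν σ hσ1 hσ
end

section
/- Let γ : Cl(V,h) → End_ℝ(S) be an irreducible real Clifford representation in the non-simple case p-q ≡ 1 or 5 (mod 8) (so γ(ν) = ε·id_S with ε = ±1). Then the anticommutant subspace A(γ) = {x ∈ End_ℝ(S) : x γ(v) = -γ(v) x for all v ∈ V} is zero. -/
/-!
The volume element `ν = e₁ ⋯ e_d` is a product of an odd number `d = p + q` of generators, so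
anything anticommuting with every `γ(v)` also anticommutes with `γ(ν) = ε • 1`. Since `ε ≠ 0`,
this forces `2 ε x = 0`, hence `x = 0`.
-/

open CliffordAlgebra

theorem mul_list_prod_of_forall_mul_eq_neg {A : Type*} [Ring A] {x : A} :
    ∀ {l : List A}, (∀ a ∈ l, x * a = -(a * x)) → x * l.prod = (-1) ^ l.length * (l.prod * x)
  | [], _ => by simp
  | a :: l, h => by
    have ha : x * a = -(a * x) := h a List.mem_cons_self
    have hl := mul_list_prod_of_forall_mul_eq_neg fun b hb => h b (List.mem_cons_of_mem a hb)
    calc x * (a :: l).prod = -(a * (x * l.prod)) := by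
          rw [List.prod_cons, ← mul_assoc, ha, neg_mul, mul_assoc]
      _ = (-1) ^ (a :: l).length * ((a :: l).prod * x) := by
          rw [hl, ← mul_assoc a, ← ((Commute.neg_one_left a).pow_left _).eq, List.prod_cons,
            List.length_cons, pow_succ, mul_neg_one, neg_mul, mul_assoc, mul_assoc]

theorem eq_zero_of_mul_smul_one_eq_neg {K A : Type*} [Field K] [Ring A] [Algebra K A]
    (h2 : (2 : K) ≠ 0) {c : K} (hc : c ≠ 0) {x : A} (h : x * c • 1 = -(c • 1 * x)) : x = 0 := by
  rw [mul_smul_one, smul_one_mul] at h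
  have h2c : (2 * c) • x = 0 := by
    rw [mul_smul, two_smul, eq_neg_iff_add_eq_zero.mp h]
  exact (smul_eq_zero.mp h2c).resolve_left (mul_ne_zero h2 hc)

theorem anticommutant_zero_nonsimple_general
    {V S : Type*} [AddCommGroup V] [Module ℝ V]
    [AddCommGroup S] [Module ℝ S]
    (Q : QuadraticForm ℝ V)
    (p q d : ℕ) (hd : d = p + q) (b : Module.Basis (Fin d) ℝ V)
    (hpq : (((p : ℤ) - q) % 8 = 1 ∨ ((p : ℤ) - q) % 8 = 5))
    (γ : CliffordAlgebra Q →ₐ[ℝ] Module.End ℝ S)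
    (ε : ℝ) (hε : ε = 1 ∨ ε = -1)
    (hvol : γ ((List.ofFn fun i => ι Q (b i)).prod) = ε • 1) :
    ∀ x : Module.End ℝ S,
      (∀ v : V, x * γ (ι Q v) = -(γ (ι Q v) * x)) → x = 0 := by
  intro x hx
  have hodd : Odd d := Nat.odd_iff.mpr (by omega)
  have hγν : γ ((List.ofFn fun i => ι Q (b i)).prod) = (List.ofFn fun i => γ (ι Q (b i))).prod := by
    rw [map_list_prod, List.map_ofFn]
    rfl
  have hxν := mul_list_prod_of_forall_mul_eq_neg (x := x) (l := List.ofFn fun i => γ (ι Q (b i)))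
    (by simpa [List.mem_ofFn] using fun i => hx (b i))
  rw [← hγν, hvol, List.length_ofFn, hodd.neg_one_pow, neg_one_mul] at hxν
  exact eq_zero_of_mul_smul_one_eq_neg two_ne_zero (by rcases hε with rfl | rfl <;> norm_num) hxν

/-- Let `γ : Cl(V,h) → End_ℝ(S)` be an irreducible real Clifford
representation in the non-simple case `p-q ≡ 1` or `5 (mod 8)` (so the volume element
satisfies `γ(ν) = ε·id_S` with `ε = ±1`).  Then the anticommutant subspace
`A(γ) = {x ∈ End_ℝ(S) : x γ(v) = -γ(v) x for all v ∈ V}` is zero. -/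
theorem anticommutant_zero_nonsimple
    {V S : Type*} [AddCommGroup V] [Module ℝ V]
    [AddCommGroup S] [Module ℝ S] [FiniteDimensional ℝ S] [Nontrivial S]
    (Q : QuadraticForm ℝ V)
    (p q d : ℕ) (hd : d = p + q) (hd0 : 0 < d) (b : Module.Basis (Fin d) ℝ V)
    (hQ : ∀ i, Q (b i) = 1 ∨ Q (b i) = -1)
    (horth : ∀ i j, i ≠ j → QuadraticMap.polar Q (b i) (b j) = 0)
    (hp : (Finset.univ.filter fun i => Q (b i) = 1).card = p)
    (hq : (Finset.univ.filter fun i => Q (b i) = -1).card = q)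
    (hpq : (((p : ℤ) - q) % 8 = 1 ∨ ((p : ℤ) - q) % 8 = 5))
    (γ : CliffordAlgebra Q →ₐ[ℝ] Module.End ℝ S)
    (hirr : ∀ U : Submodule ℝ S,
      (∀ (x : CliffordAlgebra Q), ∀ u ∈ U, γ x u ∈ U) → U = ⊥ ∨ U = ⊤)
    (ε : ℝ) (hε : ε = 1 ∨ ε = -1)
    (hvol : γ ((List.ofFn fun i => ι Q (b i)).prod) = ε • 1) :
    ∀ x : Module.End ℝ S,
      (∀ v : V, x * γ (ι Q v) = -(γ (ι Q v) * x)) → x = 0 :=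
  anticommutant_zero_nonsimple_general Q p q d hd b hpq γ ε hε hvol
end
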